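/- Let X₁ and X₂ be finite sets, X = X₁ ∪ X₂, Y = X₁ ∩ X₂. Let z₁, z'₁ ∈ Z(X₁) and z₂, z'₂ ∈ Z(X₂) be such that π_{X₁→Y}(z₁) = π_{X₂→Y}(z₂) and π_{X₁→Y}(z'₁) = π_{X₂→Y}(z'₂). If ‖π_{X₁→Y}(z₁) - π_{X₁→Y}(z'₁)‖₁ = ‖z₁ - z'₁‖₁ = ‖z₂ - z'₂‖₁, then there exist z, z' ∈ Z(X) with π_{X→X₁}(z) = z₁, π_{X→X₂}(z) = z₂, π_{X→X₁}(z') = z'₁, π_{X→X₂}(z') = z'₂, and ‖z - z'‖₁ = ‖z₁ - z'₁‖₁. -/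
import Mathlib

open Finset

/-- `ZL S` is the integral lattice with basis indexed by binary labelings of the
finite set `S`. -/
abbrev ZL {V : Type} (S : Finset V) : Type := ({x // x ∈ S} → Bool) → ℤ

/-- The projection `π_{S → T}` for `T ⊆ S`: the linear extension of `e_a ↦ e_{a|_T}`. -/
noncomputable def projZ {V : Type} [Fintype V] [DecidableEq V] {S T : Finset V}
    (h : T ⊆ S) (z : ZL S) : ZL T := fun b =>
  ∑ a : {x // x ∈ S} → Bool,
    if ∀ x : {x // x ∈ T}, a ⟨x.1, h x.2⟩ = b x then z a else 0

/-- The ℓ₁-norm on `ZL S` with respect to the standard basis. -/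
noncomputable def l1Z {V : Type} [Fintype V] [DecidableEq V] {S : Finset V}
    (z : ZL S) : ℤ := ∑ a, |z a|

/-! ### Auxiliary general lemmas -/

noncomputable def keyF (α : Type) [Fintype α] [DecidableEq α] (a : α) : ℕ :=
  (Fintype.equivFin α a : ℕ)

lemma keyF_inj (α : Type) [Fintype α] [DecidableEq α] : Function.Injective (keyF α) :=
  fun _ _ hab => (Fintype.equivFin α).injective (Fin.ext hab)

lemma telescope {α : Type} [DecidableEq α] (k : α → ℕ) (hk : Function.Injective k)
    (p : α → ℤ) (g : ℤ → ℤ) (s : Finset α) :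
    ∑ x ∈ s, (g (∑ y ∈ s.filter (fun y => k y ≤ k x), p y)
      - g (∑ y ∈ s.filter (fun y => k y < k x), p y)) = g (∑ y ∈ s, p y) - g 0 := by
  induction s using Finset.strongInduction with
  | _ s ih =>
    rcases s.eq_empty_or_nonempty with rfl | hne
    · simp
    · obtain ⟨a, ha, hmax⟩ := Finset.exists_max_image s k hne
      set t := s.erase a with hts
      have hs : s = insert a t := (Finset.insert_erase ha).symm
      have hat : a ∉ t := Finset.notMem_erase a s
      have hlt : ∀ x ∈ t, k x < k a := by
        intro x hx
        rcases Finset.mem_erase.mp hx with ⟨hne', hxs⟩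
        exact lt_of_le_of_ne (hmax x hxs) (fun e => hne' (hk e))
      have ih' := ih t (by rw [hts]; exact Finset.erase_ssubset ha)
      rw [hs, Finset.sum_insert hat]
      have h1 : ∀ x ∈ t, ((insert a t).filter (fun y => k y ≤ k x))
          = t.filter (fun y => k y ≤ k x) := by
        intro x hx
        rw [Finset.filter_insert, if_neg (by exact not_le.mpr (hlt x hx))]
      have h2 : ∀ x ∈ t, ((insert a t).filter (fun y => k y < k x))
          = t.filter (fun y => k y < k x) := by
        intro x hx
        rw [Finset.filter_insert, if_neg (by exact not_lt.mpr (hlt x hx).le)]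
      have hle : (insert a t).filter (fun y => k y ≤ k a) = insert a t := by
        rw [Finset.filter_insert, if_pos le_rfl]
        congr 1
        exact Finset.filter_eq_self.mpr (fun x hx => (hlt x hx).le)
      have hlt' : (insert a t).filter (fun y => k y < k a) = t := by
        rw [Finset.filter_insert, if_neg (lt_irrefl (k a))]
        exact Finset.filter_eq_self.mpr (fun x hx => hlt x hx)
      rw [hle, hlt']
      have hmain : ∑ x ∈ t, (g (∑ y ∈ (insert a t).filter (fun y => k y ≤ k x), p y)
          - g (∑ y ∈ (insert a t).filter (fun y => k y < k x), p y))
          = ∑ x ∈ t, (g (∑ y ∈ t.filter (fun y => k y ≤ k x), p y)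
          - g (∑ y ∈ t.filter (fun y => k y < k x), p y)) :=
        Finset.sum_congr rfl fun x hx => by rw [h1 x hx, h2 x hx]
      rw [hmain, ih', Finset.sum_insert hat]
      ring

lemma sign_mul_abs_of_abs_sum {ι : Type} [DecidableEq ι] (s : Finset ι) (f : ι → ℤ)
    (hs : |∑ x ∈ s, f x| = ∑ x ∈ s, |f x|) {i : ι} (hi : i ∈ s) :
    (∑ x ∈ s, f x).sign * |f i| = f i := by
  set T := ∑ x ∈ s, f x with hT
  have herase : T = f i + ∑ x ∈ s.erase i, f x := (Finset.add_sum_erase s f hi).symm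
  have heraseabs : ∑ x ∈ s, |f x| = |f i| + ∑ x ∈ s.erase i, |f x| :=
    (Finset.add_sum_erase s (fun x => |f x|) hi).symm
  have habs1 : |∑ x ∈ s.erase i, f x| ≤ ∑ x ∈ s.erase i, |f x| :=
    Finset.abs_sum_le_sum_abs _ _
  obtain ⟨hb1, hb2⟩ := abs_le.mp habs1
  have hfa := abs_nonneg (f i)
  have hf1 := le_abs_self (f i)
  have hf2 := neg_abs_le (f i)
  rcases lt_trichotomy T 0 with hlt | heq | hgt
  · rw [Int.sign_eq_neg_one_of_neg hlt]
    have : f i ≤ 0 := by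
      by_contra hpos
      push_neg at hpos
      rw [abs_of_neg hlt] at hs
      omega
    rw [abs_of_nonpos this]; ring
  · rw [heq, Int.sign_zero, zero_mul]
    rw [heq, abs_zero] at hs
    have := (Finset.sum_eq_zero_iff_of_nonneg (fun x _ => abs_nonneg (f x))).mp hs.symm i hi
    omega
  · rw [Int.sign_eq_one_of_pos hgt]
    have : 0 ≤ f i := by
      by_contra hneg
      push_neg at hneg
      rw [abs_of_pos hgt] at hs
      omega
    rw [abs_of_nonneg this]; ring

section Aux

variable {V : Type} [Fintype V] [DecidableEq V]

/-- Restriction of a labeling along `T ⊆ S`. -/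
def res {S T : Finset V} (h : T ⊆ S) (a : {x // x ∈ S} → Bool) : {x // x ∈ T} → Bool :=
  fun x => a ⟨x.1, h x.2⟩

lemma projZ_eq {S T : Finset V} (h : T ⊆ S) (z : ZL S) (b : {x // x ∈ T} → Bool) :
    projZ h z b = ∑ a ∈ univ.filter (fun a => res h a = b), z a := by
  rw [Finset.sum_filter]
  unfold projZ
  refine Finset.sum_congr rfl fun a _ => ?_
  congr 1
  simp [res, funext_iff]

lemma res_res {S T U : Finset V} (h1 : T ⊆ S) (h2 : U ⊆ T) (a : {x // x ∈ S} → Bool) :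
    res h2 (res h1 a) = res (h2.trans h1) a := rfl

lemma projZ_sub {S T : Finset V} (h : T ⊆ S) (u v : ZL S) :
    projZ h (u - v) = projZ h u - projZ h v := by
  funext b
  simp only [Pi.sub_apply, projZ_eq, ← Finset.sum_sub_distrib]

lemma projZ_add {S T : Finset V} (h : T ⊆ S) (u v : ZL S) :
    projZ h (u + v) = projZ h u + projZ h v := by
  funext b
  simp only [Pi.add_apply, projZ_eq, ← Finset.sum_add_distrib]

/-- Gluing two labelings that agree on the intersection. -/
def glue (X₁ X₂ : Finset V) (a₁ : {x // x ∈ X₁} → Bool) (a₂ : {x // x ∈ X₂} → Bool) :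
    {x // x ∈ X₁ ∪ X₂} → Bool :=
  fun x => if h : x.1 ∈ X₁ then a₁ ⟨x.1, h⟩
    else a₂ ⟨x.1, (mem_union.mp x.2).resolve_left h⟩

lemma res_glue₁ (X₁ X₂ : Finset V) (a₁ : {x // x ∈ X₁} → Bool) (a₂ : {x // x ∈ X₂} → Bool) :
    res (subset_union_left) (glue X₁ X₂ a₁ a₂) = a₁ := by
  funext x; simp [res, glue, x.2]

lemma res_glue₂ (X₁ X₂ : Finset V) (a₁ : {x // x ∈ X₁} → Bool) (a₂ : {x // x ∈ X₂} → Bool)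
    (hc : res (inter_subset_left : X₁ ∩ X₂ ⊆ X₁) a₁ = res (inter_subset_right : X₁ ∩ X₂ ⊆ X₂) a₂) :
    res (subset_union_right) (glue X₁ X₂ a₁ a₂) = a₂ := by
  funext x
  by_cases hx : x.1 ∈ X₁
  · have := congrFun hc ⟨x.1, mem_inter.mpr ⟨hx, x.2⟩⟩
    simpa [res, glue, hx] using this
  · simp [res, glue, hx]

lemma glue_res (X₁ X₂ : Finset V) (a : {x // x ∈ X₁ ∪ X₂} → Bool) :
    glue X₁ X₂ (res subset_union_left a) (res subset_union_right a) = a := by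
  funext x; by_cases hx : x.1 ∈ X₁ <;> simp [glue, res, hx]

lemma sum_fiber_glue₁ (X₁ X₂ : Finset V) (a₁ : {x // x ∈ X₁} → Bool)
    (f : ({x // x ∈ X₁ ∪ X₂} → Bool) → ℤ) :
    ∑ a ∈ univ.filter (fun a => res (subset_union_left : X₁ ⊆ X₁ ∪ X₂) a = a₁), f a
    = ∑ a₂ ∈ univ.filter (fun a₂ =>
        res (inter_subset_right : X₁ ∩ X₂ ⊆ X₂) a₂ = res (inter_subset_left : X₁ ∩ X₂ ⊆ X₁) a₁),
        f (glue X₁ X₂ a₁ a₂) := by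
  refine Finset.sum_nbij' (fun a => res subset_union_right a) (fun a₂ => glue X₁ X₂ a₁ a₂)
    ?_ ?_ ?_ ?_ ?_
  · intro a ha
    simp only [mem_filter, mem_univ, true_and] at ha ⊢
    rw [res_res, ← ha, res_res]
  · intro a₂ ha₂
    simp only [mem_filter, mem_univ, true_and] at ha₂ ⊢
    exact res_glue₁ X₁ X₂ a₁ a₂
  · intro a ha
    simp only [mem_filter, mem_univ, true_and] at ha
    show glue X₁ X₂ a₁ (res subset_union_right a) = a
    rw [← ha, glue_res]
  · intro a₂ ha₂
    simp only [mem_filter, mem_univ, true_and] at ha₂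
    exact res_glue₂ X₁ X₂ a₁ a₂ ha₂.symm
  · intro a ha
    simp only [mem_filter, mem_univ, true_and] at ha
    rw [← ha, glue_res]

lemma sum_fiber_glue₂ (X₁ X₂ : Finset V) (a₂ : {x // x ∈ X₂} → Bool)
    (f : ({x // x ∈ X₁ ∪ X₂} → Bool) → ℤ) :
    ∑ a ∈ univ.filter (fun a => res (subset_union_right : X₂ ⊆ X₁ ∪ X₂) a = a₂), f a
    = ∑ a₁ ∈ univ.filter (fun a₁ =>
        res (inter_subset_left : X₁ ∩ X₂ ⊆ X₁) a₁ = res (inter_subset_right : X₁ ∩ X₂ ⊆ X₂) a₂),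
        f (glue X₁ X₂ a₁ a₂) := by
  refine Finset.sum_nbij' (fun a => res subset_union_left a) (fun a₁ => glue X₁ X₂ a₁ a₂)
    ?_ ?_ ?_ ?_ ?_
  · intro a ha
    simp only [mem_filter, mem_univ, true_and] at ha ⊢
    rw [res_res, ← ha, res_res]
  · intro a₁ ha₁
    simp only [mem_filter, mem_univ, true_and] at ha₁ ⊢
    exact res_glue₂ X₁ X₂ a₁ a₂ ha₁
  · intro a ha
    simp only [mem_filter, mem_univ, true_and] at ha
    show glue X₁ X₂ (res subset_union_left a) a₂ = a
    rw [← ha, glue_res]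
  · intro a₁ ha₁
    simp only [mem_filter, mem_univ, true_and] at ha₁
    exact res_glue₁ X₁ X₂ a₁ a₂
  · intro a ha
    simp only [mem_filter, mem_univ, true_and] at ha
    rw [← ha, glue_res]

variable (X₁ X₂ : Finset V) (w₁ : ZL X₁) (w₂ : ZL X₂)

/-- The partial sums of `|w₁|` along the fiber (northwest-corner coupling data). -/
noncomputable def PP (a₁ : {x // x ∈ X₁} → Bool) : ℤ :=
  ∑ y ∈ univ.filter (fun y => res (inter_subset_left : X₁ ∩ X₂ ⊆ X₁) y
      = res (inter_subset_left : X₁ ∩ X₂ ⊆ X₁) a₁ ∧ keyF _ y ≤ keyF _ a₁), |w₁ y|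

noncomputable def PP' (a₁ : {x // x ∈ X₁} → Bool) : ℤ :=
  ∑ y ∈ univ.filter (fun y => res (inter_subset_left : X₁ ∩ X₂ ⊆ X₁) y
      = res (inter_subset_left : X₁ ∩ X₂ ⊆ X₁) a₁ ∧ keyF _ y < keyF _ a₁), |w₁ y|

noncomputable def QQ (a₂ : {x // x ∈ X₂} → Bool) : ℤ :=
  ∑ y ∈ univ.filter (fun y => res (inter_subset_right : X₁ ∩ X₂ ⊆ X₂) y
      = res (inter_subset_right : X₁ ∩ X₂ ⊆ X₂) a₂ ∧ keyF _ y ≤ keyF _ a₂), |w₂ y|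

noncomputable def QQ' (a₂ : {x // x ∈ X₂} → Bool) : ℤ :=
  ∑ y ∈ univ.filter (fun y => res (inter_subset_right : X₁ ∩ X₂ ⊆ X₂) y
      = res (inter_subset_right : X₁ ∩ X₂ ⊆ X₂) a₂ ∧ keyF _ y < keyF _ a₂), |w₂ y|

/-- The northwest-corner coupling matrix. -/
noncomputable def MM (a₁ : {x // x ∈ X₁} → Bool) (a₂ : {x // x ∈ X₂} → Bool) : ℤ :=
  min (PP X₁ X₂ w₁ a₁) (QQ X₁ X₂ w₂ a₂) - min (PP' X₁ X₂ w₁ a₁) (QQ X₁ X₂ w₂ a₂)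
    - min (PP X₁ X₂ w₁ a₁) (QQ' X₁ X₂ w₂ a₂) + min (PP' X₁ X₂ w₁ a₁) (QQ' X₁ X₂ w₂ a₂)

lemma PP_nonneg (a₁) : 0 ≤ PP X₁ X₂ w₁ a₁ :=
  Finset.sum_nonneg fun _ _ => abs_nonneg _

lemma PP'_nonneg (a₁) : 0 ≤ PP' X₁ X₂ w₁ a₁ :=
  Finset.sum_nonneg fun _ _ => abs_nonneg _

lemma QQ_nonneg (a₂) : 0 ≤ QQ X₁ X₂ w₂ a₂ :=
  Finset.sum_nonneg fun _ _ => abs_nonneg _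

lemma QQ'_nonneg (a₂) : 0 ≤ QQ' X₁ X₂ w₂ a₂ :=
  Finset.sum_nonneg fun _ _ => abs_nonneg _

lemma PP'_le_PP (a₁) : PP' X₁ X₂ w₁ a₁ ≤ PP X₁ X₂ w₁ a₁ := by
  refine Finset.sum_le_sum_of_subset_of_nonneg ?_ (fun y _ _ => abs_nonneg _)
  intro y hy
  simp only [mem_filter, mem_univ, true_and] at hy ⊢
  exact ⟨hy.1, hy.2.le⟩

lemma QQ'_le_QQ (a₂) : QQ' X₁ X₂ w₂ a₂ ≤ QQ X₁ X₂ w₂ a₂ := by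
  refine Finset.sum_le_sum_of_subset_of_nonneg ?_ (fun y _ _ => abs_nonneg _)
  intro y hy
  simp only [mem_filter, mem_univ, true_and] at hy ⊢
  exact ⟨hy.1, hy.2.le⟩

lemma PP_le_total (a₁) :
    PP X₁ X₂ w₁ a₁ ≤ ∑ y ∈ univ.filter (fun y =>
      res (inter_subset_left : X₁ ∩ X₂ ⊆ X₁) y = res (inter_subset_left : X₁ ∩ X₂ ⊆ X₁) a₁), |w₁ y| := by
  refine Finset.sum_le_sum_of_subset_of_nonneg ?_ (fun y _ _ => abs_nonneg _)
  intro y hy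
  simp only [mem_filter, mem_univ, true_and] at hy ⊢
  exact hy.1

lemma QQ_le_total (a₂) :
    QQ X₁ X₂ w₂ a₂ ≤ ∑ y ∈ univ.filter (fun y =>
      res (inter_subset_right : X₁ ∩ X₂ ⊆ X₂) y = res (inter_subset_right : X₁ ∩ X₂ ⊆ X₂) a₂), |w₂ y| := by
  refine Finset.sum_le_sum_of_subset_of_nonneg ?_ (fun y _ _ => abs_nonneg _)
  intro y hy
  simp only [mem_filter, mem_univ, true_and] at hy ⊢
  exact hy.1

lemma MM_nonneg (a₁ a₂) : 0 ≤ MM X₁ X₂ w₁ w₂ a₁ a₂ := by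
  have h1 := PP'_le_PP X₁ X₂ w₁ a₁
  have h2 := QQ'_le_QQ X₁ X₂ w₂ a₂
  unfold MM
  omega

lemma PP_sub_PP' (a₁) : PP X₁ X₂ w₁ a₁ - PP' X₁ X₂ w₁ a₁ = |w₁ a₁| := by
  unfold PP PP'
  have : univ.filter (fun y => res (inter_subset_left : X₁ ∩ X₂ ⊆ X₁) y
      = res (inter_subset_left : X₁ ∩ X₂ ⊆ X₁) a₁ ∧ keyF _ y ≤ keyF _ a₁)
      = insert a₁ (univ.filter (fun y => res (inter_subset_left : X₁ ∩ X₂ ⊆ X₁) y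
      = res (inter_subset_left : X₁ ∩ X₂ ⊆ X₁) a₁ ∧ keyF _ y < keyF _ a₁)) := by
    ext y
    simp only [mem_filter, mem_univ, true_and, mem_insert]
    constructor
    · rintro ⟨h1, h2⟩
      rcases h2.lt_or_eq with hc | hc
      · exact Or.inr ⟨h1, hc⟩
      · exact Or.inl (keyF_inj _ hc)
    · rintro (rfl | ⟨h1, h2⟩)
      · exact ⟨rfl, le_rfl⟩
      · exact ⟨h1, h2.le⟩
  rw [this, Finset.sum_insert (by simp)]
  ring

lemma QQ_sub_QQ' (a₂) : QQ X₁ X₂ w₂ a₂ - QQ' X₁ X₂ w₂ a₂ = |w₂ a₂| := by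
  unfold QQ QQ'
  have : univ.filter (fun y => res (inter_subset_right : X₁ ∩ X₂ ⊆ X₂) y
      = res (inter_subset_right : X₁ ∩ X₂ ⊆ X₂) a₂ ∧ keyF _ y ≤ keyF _ a₂)
      = insert a₂ (univ.filter (fun y => res (inter_subset_right : X₁ ∩ X₂ ⊆ X₂) y
      = res (inter_subset_right : X₁ ∩ X₂ ⊆ X₂) a₂ ∧ keyF _ y < keyF _ a₂)) := by
    ext y
    simp only [mem_filter, mem_univ, true_and, mem_insert]
    constructor
    · rintro ⟨h1, h2⟩
      rcases h2.lt_or_eq with hc | hc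
      · exact Or.inr ⟨h1, hc⟩
      · exact Or.inl (keyF_inj _ hc)
    · rintro (rfl | ⟨h1, h2⟩)
      · exact ⟨rfl, le_rfl⟩
      · exact ⟨h1, h2.le⟩
  rw [this, Finset.sum_insert (by simp)]
  ring

lemma row_sum (a₁ : {x // x ∈ X₁} → Bool)
    (hPQ : ∑ y ∈ univ.filter (fun y =>
        res (inter_subset_left : X₁ ∩ X₂ ⊆ X₁) y = res (inter_subset_left : X₁ ∩ X₂ ⊆ X₁) a₁), |w₁ y|
      = ∑ y ∈ univ.filter (fun y =>
        res (inter_subset_right : X₁ ∩ X₂ ⊆ X₂) y = res (inter_subset_left : X₁ ∩ X₂ ⊆ X₁) a₁), |w₂ y|) :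
    ∑ a₂ ∈ univ.filter (fun a₂ =>
        res (inter_subset_right : X₁ ∩ X₂ ⊆ X₂) a₂ = res (inter_subset_left : X₁ ∩ X₂ ⊆ X₁) a₁),
      MM X₁ X₂ w₁ w₂ a₁ a₂ = |w₁ a₁| := by
  set b := res (inter_subset_left : X₁ ∩ X₂ ⊆ X₁) a₁ with hb
  set g : ℤ → ℤ := fun t => min (PP X₁ X₂ w₁ a₁) t - min (PP' X₁ X₂ w₁ a₁) t with hg
  have hstep : ∀ a₂ ∈ univ.filter (fun a₂ =>
      res (inter_subset_right : X₁ ∩ X₂ ⊆ X₂) a₂ = b),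
      MM X₁ X₂ w₁ w₂ a₁ a₂
      = g (∑ y ∈ (univ.filter (fun y =>
          res (inter_subset_right : X₁ ∩ X₂ ⊆ X₂) y = b)).filter
            (fun y => keyF _ y ≤ keyF _ a₂), |w₂ y|)
      - g (∑ y ∈ (univ.filter (fun y =>
          res (inter_subset_right : X₁ ∩ X₂ ⊆ X₂) y = b)).filter
            (fun y => keyF _ y < keyF _ a₂), |w₂ y|) := by
    intro a₂ ha₂
    simp only [mem_filter, mem_univ, true_and] at ha₂
    have hQ : QQ X₁ X₂ w₂ a₂ = ∑ y ∈ (univ.filter (fun y =>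
        res (inter_subset_right : X₁ ∩ X₂ ⊆ X₂) y = b)).filter
          (fun y => keyF _ y ≤ keyF _ a₂), |w₂ y| := by
      rw [Finset.filter_filter]
      unfold QQ
      rw [ha₂]
    have hQ' : QQ' X₁ X₂ w₂ a₂ = ∑ y ∈ (univ.filter (fun y =>
        res (inter_subset_right : X₁ ∩ X₂ ⊆ X₂) y = b)).filter
          (fun y => keyF _ y < keyF _ a₂), |w₂ y| := by
      rw [Finset.filter_filter]
      unfold QQ'
      rw [ha₂]
    rw [← hQ, ← hQ']
    unfold MM
    simp only [hg]
    ring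
  rw [Finset.sum_congr rfl hstep, telescope _ (keyF_inj _)]
  have hg0 : g 0 = 0 := by
    simp only [hg]
    rw [min_eq_right (PP_nonneg X₁ X₂ w₁ a₁), min_eq_right (PP'_nonneg X₁ X₂ w₁ a₁)]
    ring
  have hT : ∑ y ∈ univ.filter (fun y =>
      res (inter_subset_right : X₁ ∩ X₂ ⊆ X₂) y = b), |w₂ y|
      = ∑ y ∈ univ.filter (fun y =>
      res (inter_subset_left : X₁ ∩ X₂ ⊆ X₁) y = b), |w₁ y| := hPQ.symm
  rw [hg0, hT]
  have h1 : PP X₁ X₂ w₁ a₁ ≤ ∑ y ∈ univ.filter (fun y =>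
      res (inter_subset_left : X₁ ∩ X₂ ⊆ X₁) y = b), |w₁ y| := PP_le_total X₁ X₂ w₁ a₁
  have h2 : PP' X₁ X₂ w₁ a₁ ≤ ∑ y ∈ univ.filter (fun y =>
      res (inter_subset_left : X₁ ∩ X₂ ⊆ X₁) y = b), |w₁ y| :=
    le_trans (PP'_le_PP X₁ X₂ w₁ a₁) h1
  simp only [hg]
  rw [min_eq_left h1, min_eq_left h2, sub_zero]
  exact PP_sub_PP' X₁ X₂ w₁ a₁

lemma col_sum (a₂ : {x // x ∈ X₂} → Bool)
    (hPQ : ∑ y ∈ univ.filter (fun y =>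
        res (inter_subset_left : X₁ ∩ X₂ ⊆ X₁) y = res (inter_subset_right : X₁ ∩ X₂ ⊆ X₂) a₂), |w₁ y|
      = ∑ y ∈ univ.filter (fun y =>
        res (inter_subset_right : X₁ ∩ X₂ ⊆ X₂) y = res (inter_subset_right : X₁ ∩ X₂ ⊆ X₂) a₂), |w₂ y|) :
    ∑ a₁ ∈ univ.filter (fun a₁ =>
        res (inter_subset_left : X₁ ∩ X₂ ⊆ X₁) a₁ = res (inter_subset_right : X₁ ∩ X₂ ⊆ X₂) a₂),
      MM X₁ X₂ w₁ w₂ a₁ a₂ = |w₂ a₂| := by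
  set b := res (inter_subset_right : X₁ ∩ X₂ ⊆ X₂) a₂ with hb
  set g : ℤ → ℤ := fun t => min t (QQ X₁ X₂ w₂ a₂) - min t (QQ' X₁ X₂ w₂ a₂) with hg
  have hstep : ∀ a₁ ∈ univ.filter (fun a₁ =>
      res (inter_subset_left : X₁ ∩ X₂ ⊆ X₁) a₁ = b),
      MM X₁ X₂ w₁ w₂ a₁ a₂
      = g (∑ y ∈ (univ.filter (fun y =>
          res (inter_subset_left : X₁ ∩ X₂ ⊆ X₁) y = b)).filter
            (fun y => keyF _ y ≤ keyF _ a₁), |w₁ y|)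
      - g (∑ y ∈ (univ.filter (fun y =>
          res (inter_subset_left : X₁ ∩ X₂ ⊆ X₁) y = b)).filter
            (fun y => keyF _ y < keyF _ a₁), |w₁ y|) := by
    intro a₁ ha₁
    simp only [mem_filter, mem_univ, true_and] at ha₁
    have hP : PP X₁ X₂ w₁ a₁ = ∑ y ∈ (univ.filter (fun y =>
        res (inter_subset_left : X₁ ∩ X₂ ⊆ X₁) y = b)).filter
          (fun y => keyF _ y ≤ keyF _ a₁), |w₁ y| := by
      rw [Finset.filter_filter]
      unfold PP
      rw [ha₁]
    have hP' : PP' X₁ X₂ w₁ a₁ = ∑ y ∈ (univ.filter (fun y =>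
        res (inter_subset_left : X₁ ∩ X₂ ⊆ X₁) y = b)).filter
          (fun y => keyF _ y < keyF _ a₁), |w₁ y| := by
      rw [Finset.filter_filter]
      unfold PP'
      rw [ha₁]
    rw [← hP, ← hP']
    unfold MM
    simp only [hg]
    ring
  rw [Finset.sum_congr rfl hstep, telescope _ (keyF_inj _)]
  have hg0 : g 0 = 0 := by
    simp only [hg]
    rw [min_eq_left (QQ_nonneg X₁ X₂ w₂ a₂), min_eq_left (QQ'_nonneg X₁ X₂ w₂ a₂)]
    ring
  rw [hg0, hPQ]
  have h1 : QQ X₁ X₂ w₂ a₂ ≤ ∑ y ∈ univ.filter (fun y =>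
      res (inter_subset_right : X₁ ∩ X₂ ⊆ X₂) y = b), |w₂ y| := QQ_le_total X₁ X₂ w₂ a₂
  have h2 : QQ' X₁ X₂ w₂ a₂ ≤ ∑ y ∈ univ.filter (fun y =>
      res (inter_subset_right : X₁ ∩ X₂ ⊆ X₂) y = b), |w₂ y| :=
    le_trans (QQ'_le_QQ X₁ X₂ w₂ a₂) h1
  simp only [hg]
  rw [min_eq_right h1, min_eq_right h2, sub_zero]
  exact QQ_sub_QQ' X₁ X₂ w₂ a₂

/-- Default extension of a labeling of the intersection to `X₁`. -/
def ext1 (X₁ X₂ : Finset V) (b : {x // x ∈ X₁ ∩ X₂} → Bool) : {x // x ∈ X₁} → Bool :=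
  fun x => if hx : x.1 ∈ X₁ ∩ X₂ then b ⟨x.1, hx⟩ else false

def ext2 (X₁ X₂ : Finset V) (b : {x // x ∈ X₁ ∩ X₂} → Bool) : {x // x ∈ X₂} → Bool :=
  fun x => if hx : x.1 ∈ X₁ ∩ X₂ then b ⟨x.1, hx⟩ else false

lemma res_ext1 (X₁ X₂ : Finset V) (b : {x // x ∈ X₁ ∩ X₂} → Bool) :
    res (inter_subset_left : X₁ ∩ X₂ ⊆ X₁) (ext1 X₁ X₂ b) = b := by
  funext x; simp [res, ext1, x.2]

lemma res_ext2 (X₁ X₂ : Finset V) (b : {x // x ∈ X₁ ∩ X₂} → Bool) :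
    res (inter_subset_right : X₁ ∩ X₂ ⊆ X₂) (ext2 X₁ X₂ b) = b := by
  funext x; simp [res, ext2, x.2]

/-- A base coupling of `z₁'` and `z₂'`. -/
noncomputable def ZP (z₁' : ZL X₁) (z₂' : ZL X₂) : ZL (X₁ ∪ X₂) := fun a =>
  (if res subset_union_left a
      = ext1 X₁ X₂ (res (inter_subset_left : X₁ ∩ X₂ ⊆ X₁) (res subset_union_left a))
    then z₂' (res subset_union_right a) else 0)
  + (if res subset_union_right a
      = ext2 X₁ X₂ (res (inter_subset_left : X₁ ∩ X₂ ⊆ X₁) (res subset_union_left a))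
    then z₁' (res subset_union_left a) else 0)
  - (if res subset_union_left a
      = ext1 X₁ X₂ (res (inter_subset_left : X₁ ∩ X₂ ⊆ X₁) (res subset_union_left a))
      ∧ res subset_union_right a
      = ext2 X₁ X₂ (res (inter_subset_left : X₁ ∩ X₂ ⊆ X₁) (res subset_union_left a))
    then projZ (inter_subset_left : X₁ ∩ X₂ ⊆ X₁) z₁'
      (res (inter_subset_left : X₁ ∩ X₂ ⊆ X₁) (res subset_union_left a)) else 0)

lemma ZP_glue (z₁' : ZL X₁) (z₂' : ZL X₂) (a₁ : {x // x ∈ X₁} → Bool)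
    (a₂ : {x // x ∈ X₂} → Bool)
    (hc : res (inter_subset_right : X₁ ∩ X₂ ⊆ X₂) a₂ = res (inter_subset_left : X₁ ∩ X₂ ⊆ X₁) a₁) :
    ZP X₁ X₂ z₁' z₂' (glue X₁ X₂ a₁ a₂) =
    (if a₁ = ext1 X₁ X₂ (res (inter_subset_left : X₁ ∩ X₂ ⊆ X₁) a₁) then z₂' a₂ else 0)
    + (if a₂ = ext2 X₁ X₂ (res (inter_subset_left : X₁ ∩ X₂ ⊆ X₁) a₁) then z₁' a₁ else 0)
    - (if a₁ = ext1 X₁ X₂ (res (inter_subset_left : X₁ ∩ X₂ ⊆ X₁) a₁)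
        ∧ a₂ = ext2 X₁ X₂ (res (inter_subset_left : X₁ ∩ X₂ ⊆ X₁) a₁)
      then projZ (inter_subset_left : X₁ ∩ X₂ ⊆ X₁) z₁' (res (inter_subset_left : X₁ ∩ X₂ ⊆ X₁) a₁) else 0) := by
  unfold ZP
  rw [res_glue₁, res_glue₂ X₁ X₂ a₁ a₂ hc.symm]

/-- The signed northwest-corner coupling of `w₁` and `w₂`. -/
noncomputable def WWf : ZL (X₁ ∪ X₂) := fun a =>
  (projZ (inter_subset_left : X₁ ∩ X₂ ⊆ X₁) w₁
      (res (inter_subset_left : X₁ ∩ X₂ ⊆ X₁) (res subset_union_left a))).sign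
    * MM X₁ X₂ w₁ w₂ (res subset_union_left a) (res subset_union_right a)

lemma WWf_glue (a₁ : {x // x ∈ X₁} → Bool) (a₂ : {x // x ∈ X₂} → Bool)
    (hc : res (inter_subset_right : X₁ ∩ X₂ ⊆ X₂) a₂ = res (inter_subset_left : X₁ ∩ X₂ ⊆ X₁) a₁) :
    WWf X₁ X₂ w₁ w₂ (glue X₁ X₂ a₁ a₂)
    = (projZ (inter_subset_left : X₁ ∩ X₂ ⊆ X₁) w₁ (res (inter_subset_left : X₁ ∩ X₂ ⊆ X₁) a₁)).sign
      * MM X₁ X₂ w₁ w₂ a₁ a₂ := by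
  unfold WWf
  rw [res_glue₁, res_glue₂ X₁ X₂ a₁ a₂ hc.symm]

lemma ZP_proj₁ (z₁' : ZL X₁) (z₂' : ZL X₂)
    (hY : projZ (inter_subset_left : X₁ ∩ X₂ ⊆ X₁) z₁'
      = projZ inter_subset_right z₂') :
    projZ subset_union_left (ZP X₁ X₂ z₁' z₂') = z₁' := by
  funext a₁
  rw [projZ_eq, sum_fiber_glue₁]
  set b := res (inter_subset_left : X₁ ∩ X₂ ⊆ X₁) a₁ with hb
  have hcong : ∀ a₂ ∈ univ.filter (fun a₂ =>
      res (inter_subset_right : X₁ ∩ X₂ ⊆ X₂) a₂ = b),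
      ZP X₁ X₂ z₁' z₂' (glue X₁ X₂ a₁ a₂) =
      (if a₁ = ext1 X₁ X₂ b then z₂' a₂ else 0)
      + (if a₂ = ext2 X₁ X₂ b then z₁' a₁ else 0)
      - (if a₁ = ext1 X₁ X₂ b ∧ a₂ = ext2 X₁ X₂ b
        then projZ (inter_subset_left : X₁ ∩ X₂ ⊆ X₁) z₁' b else 0) := by
    intro a₂ ha₂
    simp only [mem_filter, mem_univ, true_and] at ha₂
    exact ZP_glue X₁ X₂ z₁' z₂' a₁ a₂ ha₂
  rw [Finset.sum_congr rfl hcong, Finset.sum_sub_distrib, Finset.sum_add_distrib]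
  have hA : ∑ a₂ ∈ univ.filter (fun a₂ =>
      res (inter_subset_right : X₁ ∩ X₂ ⊆ X₂) a₂ = b),
      (if a₁ = ext1 X₁ X₂ b then z₂' a₂ else 0)
      = if a₁ = ext1 X₁ X₂ b then projZ inter_subset_right z₂' b else 0 := by
    by_cases hh : a₁ = ext1 X₁ X₂ b
    · simp only [hh, if_true]
      rw [projZ_eq]
    · simp [hh]
  have hB : ∑ a₂ ∈ univ.filter (fun a₂ =>
      res (inter_subset_right : X₁ ∩ X₂ ⊆ X₂) a₂ = b),
      (if a₂ = ext2 X₁ X₂ b then z₁' a₁ else 0) = z₁' a₁ := by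
    rw [Finset.sum_ite_eq']
    rw [if_pos (by simp [res_ext2])]
  have hC : ∑ a₂ ∈ univ.filter (fun a₂ =>
      res (inter_subset_right : X₁ ∩ X₂ ⊆ X₂) a₂ = b),
      (if a₁ = ext1 X₁ X₂ b ∧ a₂ = ext2 X₁ X₂ b
        then projZ (inter_subset_left : X₁ ∩ X₂ ⊆ X₁) z₁' b else 0)
      = if a₁ = ext1 X₁ X₂ b then projZ (inter_subset_left : X₁ ∩ X₂ ⊆ X₁) z₁' b else 0 := by
    by_cases hh : a₁ = ext1 X₁ X₂ b
    · simp only [hh, true_and, if_true]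
      rw [Finset.sum_ite_eq']
      rw [if_pos (by simp [res_ext2])]
    · simp [hh]
  rw [hA, hB, hC, ← congrFun hY b]
  split_ifs <;> ring

lemma ZP_proj₂ (z₁' : ZL X₁) (z₂' : ZL X₂) :
    projZ subset_union_right (ZP X₁ X₂ z₁' z₂') = z₂' := by
  funext a₂
  rw [projZ_eq, sum_fiber_glue₂]
  set b := res (inter_subset_right : X₁ ∩ X₂ ⊆ X₂) a₂ with hb
  have hcong : ∀ a₁ ∈ univ.filter (fun a₁ =>
      res (inter_subset_left : X₁ ∩ X₂ ⊆ X₁) a₁ = b),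
      ZP X₁ X₂ z₁' z₂' (glue X₁ X₂ a₁ a₂) =
      (if a₁ = ext1 X₁ X₂ b then z₂' a₂ else 0)
      + (if a₂ = ext2 X₁ X₂ b then z₁' a₁ else 0)
      - (if a₁ = ext1 X₁ X₂ b ∧ a₂ = ext2 X₁ X₂ b
        then projZ (inter_subset_left : X₁ ∩ X₂ ⊆ X₁) z₁' b else 0) := by
    intro a₁ ha₁
    simp only [mem_filter, mem_univ, true_and] at ha₁
    rw [ZP_glue X₁ X₂ z₁' z₂' a₁ a₂ (by rw [ha₁]), ha₁]
  rw [Finset.sum_congr rfl hcong, Finset.sum_sub_distrib, Finset.sum_add_distrib]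
  have hA : ∑ a₁ ∈ univ.filter (fun a₁ =>
      res (inter_subset_left : X₁ ∩ X₂ ⊆ X₁) a₁ = b),
      (if a₁ = ext1 X₁ X₂ b then z₂' a₂ else 0) = z₂' a₂ := by
    rw [Finset.sum_ite_eq']
    rw [if_pos (by simp [res_ext1])]
  have hB : ∑ a₁ ∈ univ.filter (fun a₁ =>
      res (inter_subset_left : X₁ ∩ X₂ ⊆ X₁) a₁ = b),
      (if a₂ = ext2 X₁ X₂ b then z₁' a₁ else 0)
      = if a₂ = ext2 X₁ X₂ b then projZ (inter_subset_left : X₁ ∩ X₂ ⊆ X₁) z₁' b else 0 := by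
    by_cases hh : a₂ = ext2 X₁ X₂ b
    · simp only [hh, if_true]
      rw [projZ_eq]
    · simp [hh]
  have hC : ∑ a₁ ∈ univ.filter (fun a₁ =>
      res (inter_subset_left : X₁ ∩ X₂ ⊆ X₁) a₁ = b),
      (if a₁ = ext1 X₁ X₂ b ∧ a₂ = ext2 X₁ X₂ b
        then projZ (inter_subset_left : X₁ ∩ X₂ ⊆ X₁) z₁' b else 0)
      = if a₂ = ext2 X₁ X₂ b then projZ (inter_subset_left : X₁ ∩ X₂ ⊆ X₁) z₁' b else 0 := by
    by_cases hh : a₂ = ext2 X₁ X₂ b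
    · simp only [hh, and_true, if_true]
      rw [Finset.sum_ite_eq']
      rw [if_pos (by simp [res_ext1])]
    · simp [hh]
  rw [hA, hB, hC]
  ring

lemma WWf_proj₁
    (hE1 : ∀ b, ∑ a₁ ∈ univ.filter (fun a₁ =>
        res (inter_subset_left : X₁ ∩ X₂ ⊆ X₁) a₁ = b), |w₁ a₁|
      = |projZ (inter_subset_left : X₁ ∩ X₂ ⊆ X₁) w₁ b|)
    (hE2 : ∀ b, ∑ a₂ ∈ univ.filter (fun a₂ =>
        res (inter_subset_right : X₁ ∩ X₂ ⊆ X₂) a₂ = b), |w₂ a₂|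
      = |projZ (inter_subset_left : X₁ ∩ X₂ ⊆ X₁) w₁ b|)
    (hS1 : ∀ a₁, (projZ (inter_subset_left : X₁ ∩ X₂ ⊆ X₁) w₁ (res (inter_subset_left : X₁ ∩ X₂ ⊆ X₁) a₁)).sign * |w₁ a₁|
      = w₁ a₁) :
    projZ subset_union_left (WWf X₁ X₂ w₁ w₂) = w₁ := by
  funext a₁
  rw [projZ_eq, sum_fiber_glue₁]
  have hcong : ∀ a₂ ∈ univ.filter (fun a₂ =>
      res (inter_subset_right : X₁ ∩ X₂ ⊆ X₂) a₂ = res (inter_subset_left : X₁ ∩ X₂ ⊆ X₁) a₁),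
      WWf X₁ X₂ w₁ w₂ (glue X₁ X₂ a₁ a₂)
      = (projZ (inter_subset_left : X₁ ∩ X₂ ⊆ X₁) w₁ (res (inter_subset_left : X₁ ∩ X₂ ⊆ X₁) a₁)).sign
        * MM X₁ X₂ w₁ w₂ a₁ a₂ := by
    intro a₂ ha₂
    simp only [mem_filter, mem_univ, true_and] at ha₂
    exact WWf_glue X₁ X₂ w₁ w₂ a₁ a₂ ha₂
  rw [Finset.sum_congr rfl hcong, ← Finset.mul_sum,
    row_sum X₁ X₂ w₁ w₂ a₁
      ((hE1 (res (inter_subset_left : X₁ ∩ X₂ ⊆ X₁) a₁)).trans (hE2 (res (inter_subset_left : X₁ ∩ X₂ ⊆ X₁) a₁)).symm)]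
  exact hS1 a₁

lemma WWf_proj₂
    (hE1 : ∀ b, ∑ a₁ ∈ univ.filter (fun a₁ =>
        res (inter_subset_left : X₁ ∩ X₂ ⊆ X₁) a₁ = b), |w₁ a₁|
      = |projZ (inter_subset_left : X₁ ∩ X₂ ⊆ X₁) w₁ b|)
    (hE2 : ∀ b, ∑ a₂ ∈ univ.filter (fun a₂ =>
        res (inter_subset_right : X₁ ∩ X₂ ⊆ X₂) a₂ = b), |w₂ a₂|
      = |projZ (inter_subset_left : X₁ ∩ X₂ ⊆ X₁) w₁ b|)
    (hS2 : ∀ a₂, (projZ (inter_subset_left : X₁ ∩ X₂ ⊆ X₁) w₁ (res (inter_subset_right : X₁ ∩ X₂ ⊆ X₂) a₂)).sign * |w₂ a₂|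
      = w₂ a₂) :
    projZ subset_union_right (WWf X₁ X₂ w₁ w₂) = w₂ := by
  funext a₂
  rw [projZ_eq, sum_fiber_glue₂]
  have hcong : ∀ a₁ ∈ univ.filter (fun a₁ =>
      res (inter_subset_left : X₁ ∩ X₂ ⊆ X₁) a₁ = res (inter_subset_right : X₁ ∩ X₂ ⊆ X₂) a₂),
      WWf X₁ X₂ w₁ w₂ (glue X₁ X₂ a₁ a₂)
      = (projZ (inter_subset_left : X₁ ∩ X₂ ⊆ X₁) w₁ (res (inter_subset_right : X₁ ∩ X₂ ⊆ X₂) a₂)).sign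
        * MM X₁ X₂ w₁ w₂ a₁ a₂ := by
    intro a₁ ha₁
    simp only [mem_filter, mem_univ, true_and] at ha₁
    rw [WWf_glue X₁ X₂ w₁ w₂ a₁ a₂ (by rw [ha₁]), ha₁]
  rw [Finset.sum_congr rfl hcong, ← Finset.mul_sum,
    col_sum X₁ X₂ w₁ w₂ a₂
      ((hE1 (res (inter_subset_right : X₁ ∩ X₂ ⊆ X₂) a₂)).trans (hE2 (res (inter_subset_right : X₁ ∩ X₂ ⊆ X₂) a₂)).symm)]
  exact hS2 a₂

lemma WWf_l1
    (hE1 : ∀ b, ∑ a₁ ∈ univ.filter (fun a₁ =>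
        res (inter_subset_left : X₁ ∩ X₂ ⊆ X₁) a₁ = b), |w₁ a₁|
      = |projZ (inter_subset_left : X₁ ∩ X₂ ⊆ X₁) w₁ b|)
    (hE2 : ∀ b, ∑ a₂ ∈ univ.filter (fun a₂ =>
        res (inter_subset_right : X₁ ∩ X₂ ⊆ X₂) a₂ = b), |w₂ a₂|
      = |projZ (inter_subset_left : X₁ ∩ X₂ ⊆ X₁) w₁ b|)
    (hS1 : ∀ a₁, (projZ (inter_subset_left : X₁ ∩ X₂ ⊆ X₁) w₁ (res (inter_subset_left : X₁ ∩ X₂ ⊆ X₁) a₁)).sign * |w₁ a₁|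
      = w₁ a₁) :
    l1Z (WWf X₁ X₂ w₁ w₂) = l1Z w₁ := by
  unfold l1Z
  rw [← Finset.sum_fiberwise_of_maps_to
    (g := res (subset_union_left : X₁ ⊆ X₁ ∪ X₂)) (t := univ)
    (fun a _ => mem_univ _) (fun a => |WWf X₁ X₂ w₁ w₂ a|)]
  refine Finset.sum_congr rfl fun a₁ _ => ?_
  rw [sum_fiber_glue₁]
  have hcong : ∀ a₂ ∈ univ.filter (fun a₂ =>
      res (inter_subset_right : X₁ ∩ X₂ ⊆ X₂) a₂ = res (inter_subset_left : X₁ ∩ X₂ ⊆ X₁) a₁),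
      |WWf X₁ X₂ w₁ w₂ (glue X₁ X₂ a₁ a₂)|
      = |(projZ (inter_subset_left : X₁ ∩ X₂ ⊆ X₁) w₁ (res (inter_subset_left : X₁ ∩ X₂ ⊆ X₁) a₁)).sign|
        * MM X₁ X₂ w₁ w₂ a₁ a₂ := by
    intro a₂ ha₂
    simp only [mem_filter, mem_univ, true_and] at ha₂
    rw [WWf_glue X₁ X₂ w₁ w₂ a₁ a₂ ha₂, abs_mul,
      abs_of_nonneg (MM_nonneg X₁ X₂ w₁ w₂ a₁ a₂)]
  rw [Finset.sum_congr rfl hcong, ← Finset.mul_sum,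
    row_sum X₁ X₂ w₁ w₂ a₁
      ((hE1 (res (inter_subset_left : X₁ ∩ X₂ ⊆ X₁) a₁)).trans (hE2 (res (inter_subset_left : X₁ ∩ X₂ ⊆ X₁) a₁)).symm)]
  set s0 : ℤ := (projZ (inter_subset_left : X₁ ∩ X₂ ⊆ X₁) w₁
      (res (inter_subset_left : X₁ ∩ X₂ ⊆ X₁) a₁)).sign with hs0
  have hkey : abs (s0 * abs (w₁ a₁)) = abs s0 * abs (w₁ a₁) := by
    rw [abs_mul, abs_abs]
  rw [← hkey, hS1 a₁]

end Aux

theorem glue_cutchange {V : Type} [Fintype V] [DecidableEq V] (X₁ X₂ : Finset V)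
    (z₁ z₁' : ZL X₁) (z₂ z₂' : ZL X₂)
    (h : projZ (T := X₁ ∩ X₂) inter_subset_left z₁
        = projZ (T := X₁ ∩ X₂) inter_subset_right z₂)
    (h' : projZ (T := X₁ ∩ X₂) inter_subset_left z₁'
        = projZ (T := X₁ ∩ X₂) inter_subset_right z₂')
    (hnorm₁ : l1Z (projZ (T := X₁ ∩ X₂) inter_subset_left z₁
        - projZ (T := X₁ ∩ X₂) inter_subset_left z₁') = l1Z (z₁ - z₁'))
    (hnorm₂ : l1Z (z₁ - z₁') = l1Z (z₂ - z₂')) :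
    ∃ z z' : ZL (X₁ ∪ X₂),
      projZ subset_union_left z = z₁ ∧ projZ subset_union_right z = z₂ ∧
      projZ subset_union_left z' = z₁' ∧ projZ subset_union_right z' = z₂' ∧
      l1Z (z - z') = l1Z (z₁ - z₁') := by
  classical
  have hwY₂ : projZ (inter_subset_right : X₁ ∩ X₂ ⊆ X₂) (z₂ - z₂')
      = projZ (inter_subset_left : X₁ ∩ X₂ ⊆ X₁) (z₁ - z₁') := by
    rw [projZ_sub, projZ_sub, h, h']
  have hfib1 : ∀ b, projZ (inter_subset_left : X₁ ∩ X₂ ⊆ X₁) (z₁ - z₁') b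
      = ∑ a₁ ∈ univ.filter (fun a₁ =>
          res (inter_subset_left : X₁ ∩ X₂ ⊆ X₁) a₁ = b), (z₁ - z₁') a₁ :=
    fun b => projZ_eq _ _ _
  have hfib2 : ∀ b, projZ (inter_subset_left : X₁ ∩ X₂ ⊆ X₁) (z₁ - z₁') b
      = ∑ a₂ ∈ univ.filter (fun a₂ =>
          res (inter_subset_right : X₁ ∩ X₂ ⊆ X₂) a₂ = b), (z₂ - z₂') a₂ := by
    intro b
    rw [← hwY₂]
    exact projZ_eq _ _ _
  have hl1 : ∑ b, |projZ (inter_subset_left : X₁ ∩ X₂ ⊆ X₁) (z₁ - z₁') b|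
      = ∑ a₁, |(z₁ - z₁') a₁| := by
    have h1 : l1Z (projZ (inter_subset_left : X₁ ∩ X₂ ⊆ X₁) (z₁ - z₁')) = l1Z (z₁ - z₁') := by
      rw [projZ_sub]
      exact hnorm₁
    unfold l1Z at h1
    exact h1
  have hl2 : ∑ b, |projZ (inter_subset_left : X₁ ∩ X₂ ⊆ X₁) (z₁ - z₁') b|
      = ∑ a₂, |(z₂ - z₂') a₂| := by
    have h1 : l1Z (projZ (inter_subset_left : X₁ ∩ X₂ ⊆ X₁) (z₁ - z₁')) = l1Z (z₂ - z₂') := by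
      rw [projZ_sub]
      exact hnorm₁.trans hnorm₂
    unfold l1Z at h1
    exact h1
  have hE1 : ∀ b, ∑ a₁ ∈ univ.filter (fun a₁ =>
      res (inter_subset_left : X₁ ∩ X₂ ⊆ X₁) a₁ = b), |(z₁ - z₁') a₁|
      = |projZ (inter_subset_left : X₁ ∩ X₂ ⊆ X₁) (z₁ - z₁') b| := by
    have hsplit : ∑ a₁, |(z₁ - z₁') a₁| = ∑ b, ∑ a₁ ∈ univ.filter (fun a₁ =>
        res (inter_subset_left : X₁ ∩ X₂ ⊆ X₁) a₁ = b), |(z₁ - z₁') a₁| :=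
      (Finset.sum_fiberwise_of_maps_to
        (g := res (inter_subset_left : X₁ ∩ X₂ ⊆ X₁)) (t := univ)
        (fun a _ => mem_univ _) _).symm
    have htot : ∑ b, |projZ (inter_subset_left : X₁ ∩ X₂ ⊆ X₁) (z₁ - z₁') b|
        = ∑ b, ∑ a₁ ∈ univ.filter (fun a₁ =>
          res (inter_subset_left : X₁ ∩ X₂ ⊆ X₁) a₁ = b), |(z₁ - z₁') a₁| :=
      hl1.trans hsplit
    have hle : ∀ b ∈ (univ : Finset ({x // x ∈ X₁ ∩ X₂} → Bool)),
        |projZ (inter_subset_left : X₁ ∩ X₂ ⊆ X₁) (z₁ - z₁') b|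
        ≤ ∑ a₁ ∈ univ.filter (fun a₁ =>
          res (inter_subset_left : X₁ ∩ X₂ ⊆ X₁) a₁ = b), |(z₁ - z₁') a₁| := by
      intro b _
      rw [hfib1 b]
      exact Finset.abs_sum_le_sum_abs _ _
    intro b
    exact (((Finset.sum_eq_sum_iff_of_le hle).mp htot) b (mem_univ b)).symm
  have hE2 : ∀ b, ∑ a₂ ∈ univ.filter (fun a₂ =>
      res (inter_subset_right : X₁ ∩ X₂ ⊆ X₂) a₂ = b), |(z₂ - z₂') a₂|
      = |projZ (inter_subset_left : X₁ ∩ X₂ ⊆ X₁) (z₁ - z₁') b| := by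
    have hsplit : ∑ a₂, |(z₂ - z₂') a₂| = ∑ b, ∑ a₂ ∈ univ.filter (fun a₂ =>
        res (inter_subset_right : X₁ ∩ X₂ ⊆ X₂) a₂ = b), |(z₂ - z₂') a₂| :=
      (Finset.sum_fiberwise_of_maps_to
        (g := res (inter_subset_right : X₁ ∩ X₂ ⊆ X₂)) (t := univ)
        (fun a _ => mem_univ _) _).symm
    have htot : ∑ b, |projZ (inter_subset_left : X₁ ∩ X₂ ⊆ X₁) (z₁ - z₁') b|
        = ∑ b, ∑ a₂ ∈ univ.filter (fun a₂ =>
          res (inter_subset_right : X₁ ∩ X₂ ⊆ X₂) a₂ = b), |(z₂ - z₂') a₂| :=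
      hl2.trans hsplit
    have hle : ∀ b ∈ (univ : Finset ({x // x ∈ X₁ ∩ X₂} → Bool)),
        |projZ (inter_subset_left : X₁ ∩ X₂ ⊆ X₁) (z₁ - z₁') b|
        ≤ ∑ a₂ ∈ univ.filter (fun a₂ =>
          res (inter_subset_right : X₁ ∩ X₂ ⊆ X₂) a₂ = b), |(z₂ - z₂') a₂| := by
      intro b _
      rw [hfib2 b]
      exact Finset.abs_sum_le_sum_abs _ _
    intro b
    exact (((Finset.sum_eq_sum_iff_of_le hle).mp htot) b (mem_univ b)).symm
  have hS1 : ∀ a₁, (projZ (inter_subset_left : X₁ ∩ X₂ ⊆ X₁) (z₁ - z₁')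
      (res (inter_subset_left : X₁ ∩ X₂ ⊆ X₁) a₁)).sign * |(z₁ - z₁') a₁|
      = (z₁ - z₁') a₁ := by
    intro a₁
    have hmem : a₁ ∈ univ.filter (fun y =>
        res (inter_subset_left : X₁ ∩ X₂ ⊆ X₁) y
        = res (inter_subset_left : X₁ ∩ X₂ ⊆ X₁) a₁) := by simp
    have habs : |∑ y ∈ univ.filter (fun y =>
        res (inter_subset_left : X₁ ∩ X₂ ⊆ X₁) y
        = res (inter_subset_left : X₁ ∩ X₂ ⊆ X₁) a₁), (z₁ - z₁') y|
        = ∑ y ∈ univ.filter (fun y =>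
        res (inter_subset_left : X₁ ∩ X₂ ⊆ X₁) y
        = res (inter_subset_left : X₁ ∩ X₂ ⊆ X₁) a₁), |(z₁ - z₁') y| := by
      rw [← hfib1]
      exact (hE1 _).symm
    have hres := sign_mul_abs_of_abs_sum _ _ habs hmem
    rw [← hfib1 (res (inter_subset_left : X₁ ∩ X₂ ⊆ X₁) a₁)] at hres
    exact hres
  have hS2 : ∀ a₂, (projZ (inter_subset_left : X₁ ∩ X₂ ⊆ X₁) (z₁ - z₁')
      (res (inter_subset_right : X₁ ∩ X₂ ⊆ X₂) a₂)).sign * |(z₂ - z₂') a₂|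
      = (z₂ - z₂') a₂ := by
    intro a₂
    have hmem : a₂ ∈ univ.filter (fun y =>
        res (inter_subset_right : X₁ ∩ X₂ ⊆ X₂) y
        = res (inter_subset_right : X₁ ∩ X₂ ⊆ X₂) a₂) := by simp
    have habs : |∑ y ∈ univ.filter (fun y =>
        res (inter_subset_right : X₁ ∩ X₂ ⊆ X₂) y
        = res (inter_subset_right : X₁ ∩ X₂ ⊆ X₂) a₂), (z₂ - z₂') y|
        = ∑ y ∈ univ.filter (fun y =>
        res (inter_subset_right : X₁ ∩ X₂ ⊆ X₂) y
        = res (inter_subset_right : X₁ ∩ X₂ ⊆ X₂) a₂), |(z₂ - z₂') y| := by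
      rw [← hfib2]
      exact (hE2 _).symm
    have hres := sign_mul_abs_of_abs_sum _ _ habs hmem
    rw [← hfib2 (res (inter_subset_right : X₁ ∩ X₂ ⊆ X₂) a₂)] at hres
    exact hres
  refine ⟨ZP X₁ X₂ z₁' z₂' + WWf X₁ X₂ (z₁ - z₁') (z₂ - z₂'), ZP X₁ X₂ z₁' z₂',
    ?_, ?_, ?_, ?_, ?_⟩
  · rw [projZ_add, ZP_proj₁ X₁ X₂ z₁' z₂' h', WWf_proj₁ X₁ X₂ _ _ hE1 hE2 hS1]
    funext a₁
    simp only [Pi.add_apply, Pi.sub_apply]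
    ring
  · rw [projZ_add, ZP_proj₂ X₁ X₂ z₁' z₂', WWf_proj₂ X₁ X₂ _ _ hE1 hE2 hS2]
    funext a₂
    simp only [Pi.add_apply, Pi.sub_apply]
    ring
  · exact ZP_proj₁ X₁ X₂ z₁' z₂' h'
  · exact ZP_proj₂ X₁ X₂ z₁' z₂'
  · have hzz : ZP X₁ X₂ z₁' z₂' + WWf X₁ X₂ (z₁ - z₁') (z₂ - z₂') - ZP X₁ X₂ z₁' z₂'
        = WWf X₁ X₂ (z₁ - z₁') (z₂ - z₂') := by
      funext a
      simp only [Pi.add_apply, Pi.sub_apply]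
      ring
    rw [hzz]
    exact WWf_l1 X₁ X₂ _ _ hE1 hE2 hS1
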